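/- arXiv:1104.0963 — 6 statements merged into one kernel-verified Lean document; each statement's English description precedes it below -/
import Mathlib

section
/- Let G be a finite simple connected graph with Laplacian L, let ω > 0, and let E_ω(L) be the span of eigenvectors of L with eigenvalues ≤ ω. Then f ∈ E_ω(L) if and only if ‖L^s f‖ ≤ ω^s ‖f‖ for all real (equivalently all natural) s ≥ 0. -/
/-!
Diagonalise `L` in an orthonormal eigenbasis `(b j)` with eigenvalues `μ j ≥ 0`. Membership in
`E_ω(L)` means that every coefficient `⟪b j, f⟫` with `μ j > ω` vanishes, and `L ^ s` multiplies
the `j`-th coefficient by `μ j ^ s`. If only eigenvalues `≤ ω` occur, Parseval gives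
`‖L ^ s f‖ ≤ ω ^ s ‖f‖`. Conversely `μ j ^ s |⟪b j, f⟫| ≤ ‖L ^ s f‖ ≤ ω ^ s ‖f‖` for all `s`
forces `⟪b j, f⟫ = 0` once `μ j > ω ≥ 0`, since `(ω / μ j) ^ s → 0`.
-/

open Matrix WithLp Filter Topology

/-- The ℓ²-norm of a function on the vertices of a finite graph. -/
noncomputable def gnorm {V : Type*} [Fintype V] (f : V → ℝ) : ℝ :=
  Real.sqrt (∑ v, f v ^ 2)

/-- `E_ω(L)`: the span of eigenvectors of the combinatorial Laplacian `L`
whose eigenvalues are at most `ω`. -/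
noncomputable def Eomega {V : Type*} [Fintype V] [DecidableEq V]
    (G : SimpleGraph V) [DecidableRel G.Adj] (ω : ℝ) : Submodule ℝ (V → ℝ) :=
  Submodule.span ℝ
    {f : V → ℝ | f ≠ 0 ∧ ∃ μ : ℝ, μ ≤ ω ∧ (G.lapMatrix ℝ).mulVec f = μ • f}

namespace Matrix.IsHermitian

variable {n : Type*} [Fintype n] [DecidableEq n] {A : Matrix n n ℝ} (hA : A.IsHermitian)

lemma eigenvectorBasis_repr_mulVec (g : n → ℝ) (j : n) :
    hA.eigenvectorBasis.repr (toLp 2 (A *ᵥ g)) j =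
      hA.eigenvalues j * hA.eigenvectorBasis.repr (toLp 2 g) j := by
  have hT := isSymmetric_toEuclideanLin_iff.mpr hA
  have hb : toEuclideanLin A (hA.eigenvectorBasis j) = hA.eigenvalues j • hA.eigenvectorBasis j :=
    congrArg (toLp 2) (hA.mulVec_eigenvectorBasis j)
  rw [OrthonormalBasis.repr_apply_apply, OrthonormalBasis.repr_apply_apply,
    show toLp 2 (A *ᵥ g) = toEuclideanLin A (toLp 2 g) from rfl, ← hT, hb, real_inner_smul_left]

lemma eigenvectorBasis_repr_pow_mulVec (s : ℕ) (g : n → ℝ) (j : n) :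
    hA.eigenvectorBasis.repr (toLp 2 ((A ^ s) *ᵥ g)) j =
      hA.eigenvalues j ^ s * hA.eigenvectorBasis.repr (toLp 2 g) j := by
  induction s with
  | zero => simp
  | succ s ih =>
    rw [pow_succ', ← mulVec_mulVec, eigenvectorBasis_repr_mulVec, ih, pow_succ', mul_assoc]

lemma mem_span_eigenvectors_iff (ω : ℝ) (f : n → ℝ) :
    f ∈ Submodule.span ℝ {g : n → ℝ | g ≠ 0 ∧ ∃ μ : ℝ, μ ≤ ω ∧ A *ᵥ g = μ • g} ↔
      ∀ j, ω < hA.eigenvalues j → hA.eigenvectorBasis.repr (toLp 2 f) j = 0 := by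
  constructor
  · intro hf j hj
    induction hf using Submodule.span_induction with
    | mem g hg =>
      obtain ⟨-, μ, hμ, hAg⟩ := hg
      have h := hA.eigenvectorBasis_repr_mulVec g j
      rw [hAg, toLp_smul, map_smul, PiLp.smul_apply, smul_eq_mul] at h
      exact (mul_eq_zero.1 (by linarith : (hA.eigenvalues j - μ) * _ = 0)).resolve_left
        (by linarith)
    | zero => simp
    | add x y _ _ hx hy => simp [hx, hy]
    | smul a x _ hx => simp [hx]
  · intro hc
    have hf : f = ∑ j, hA.eigenvectorBasis.repr (toLp 2 f) j • ⇑(hA.eigenvectorBasis j) := by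
      simpa using congrArg ofLp (hA.eigenvectorBasis.sum_repr (toLp 2 f)).symm
    rw [hf]
    refine Submodule.sum_mem _ fun j _ => ?_
    rcases lt_or_ge ω (hA.eigenvalues j) with hj | hj
    · simp [hc j hj]
    · refine Submodule.smul_mem _ _
        (Submodule.subset_span ⟨?_, _, hj, hA.mulVec_eigenvectorBasis j⟩)
      simpa using hA.eigenvectorBasis.orthonormal.ne_zero j

end Matrix.IsHermitian

lemma EuclideanSpace.norm_le_norm_of_forall_norm_le {𝕜 ι : Type*} [RCLike 𝕜] [Fintype ι]
    {x y : EuclideanSpace 𝕜 ι} (h : ∀ i, ‖x i‖ ≤ ‖y i‖) : ‖x‖ ≤ ‖y‖ := by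
  rw [EuclideanSpace.norm_eq, EuclideanSpace.norm_eq]
  gcongr with i
  exact h i

lemma le_zero_of_forall_pow_mul_le {a C μ ω : ℝ} (hω : 0 ≤ ω) (hωμ : ω < μ)
    (h : ∀ s : ℕ, μ ^ s * a ≤ ω ^ s * C) : a ≤ 0 := by
  have hμ : 0 < μ := hω.trans_lt hωμ
  have hlim : Tendsto (fun s : ℕ => (ω / μ) ^ s * C) atTop (𝓝 0) := by
    simpa using (tendsto_pow_atTop_nhds_zero_of_lt_one (div_nonneg hω hμ.le)
      ((div_lt_one hμ).2 hωμ)).mul_const C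
  refine ge_of_tendsto' hlim fun s => ?_
  rw [div_pow, div_mul_eq_mul_div, le_div_iff₀ (pow_pos hμ s), mul_comm]
  exact h s

namespace Matrix.PosSemidef

variable {n : Type*} [Fintype n] [DecidableEq n] {A : Matrix n n ℝ} (hA : A.PosSemidef)

lemma forall_norm_pow_mulVec_le_iff {ω : ℝ} (hω : 0 ≤ ω) (f : n → ℝ) :
    (∀ s : ℕ, ‖toLp 2 ((A ^ s) *ᵥ f)‖ ≤ ω ^ s * ‖toLp 2 f‖) ↔
      ∀ j, ω < hA.1.eigenvalues j → hA.1.eigenvectorBasis.repr (toLp 2 f) j = 0 := by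
  have hnorm (g : n → ℝ) : ‖toLp 2 g‖ = ‖hA.1.eigenvectorBasis.repr (toLp 2 g)‖ :=
    (hA.1.eigenvectorBasis.repr.norm_map _).symm
  constructor
  · intro h j hj
    refine abs_nonpos_iff.1 (le_zero_of_forall_pow_mul_le (C := ‖toLp 2 f‖) hω hj fun s => ?_)
    calc hA.1.eigenvalues j ^ s * |hA.1.eigenvectorBasis.repr (toLp 2 f) j|
        = ‖hA.1.eigenvectorBasis.repr (toLp 2 ((A ^ s) *ᵥ f)) j‖ := by
          rw [hA.1.eigenvectorBasis_repr_pow_mulVec, Real.norm_eq_abs, abs_mul,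
            abs_of_nonneg (pow_nonneg (hA.eigenvalues_nonneg j) s)]
      _ ≤ ‖toLp 2 ((A ^ s) *ᵥ f)‖ := (PiLp.norm_apply_le _ j).trans_eq (hnorm _).symm
      _ ≤ ω ^ s * ‖toLp 2 f‖ := h s
  · intro hc s
    rw [hnorm ((A ^ s) *ᵥ f), hnorm f, ← abs_of_nonneg (pow_nonneg hω s), ← Real.norm_eq_abs,
      ← norm_smul]
    refine EuclideanSpace.norm_le_norm_of_forall_norm_le fun j => ?_
    rw [hA.1.eigenvectorBasis_repr_pow_mulVec, PiLp.smul_apply, norm_smul, norm_mul]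
    rcases lt_or_ge ω (hA.1.eigenvalues j) with hj | hj
    · simp [hc j hj]
    · gcongr
      rw [Real.norm_eq_abs, Real.norm_eq_abs, abs_of_nonneg (pow_nonneg hω s),
        abs_of_nonneg (pow_nonneg (hA.eigenvalues_nonneg j) s)]
      exact pow_le_pow_left₀ (hA.eigenvalues_nonneg j) hj s

end Matrix.PosSemidef

lemma gnorm_eq_norm_toLp {V : Type*} [Fintype V] (f : V → ℝ) : gnorm f = ‖toLp 2 f‖ := by
  simp [gnorm, EuclideanSpace.norm_eq, sq_abs]

theorem stmt_2_general {V : Type*} [Fintype V] [DecidableEq V]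
    (G : SimpleGraph V) [DecidableRel G.Adj]
    (ω : ℝ) (hω : 0 < ω) (f : V → ℝ) :
    f ∈ Eomega G ω ↔
      ∀ s : ℕ, gnorm (((G.lapMatrix ℝ) ^ s).mulVec f) ≤ ω ^ s * gnorm f := by
  have hL := G.posSemidef_lapMatrix ℝ
  simp only [gnorm_eq_norm_toLp]
  exact (hL.1.mem_span_eigenvectors_iff ω f).trans (hL.forall_norm_pow_mulVec_le_iff hω.le f).symm

/-- `f ∈ E_ω(L)` iff the Bernstein inequality `‖L^s f‖ ≤ ω^s ‖f‖` holds for all natural `s`. -/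
theorem stmt_2 {V : Type*} [Fintype V] [DecidableEq V]
    (G : SimpleGraph V) [DecidableRel G.Adj] (hG : G.Connected)
    (ω : ℝ) (hω : 0 < ω) (f : V → ℝ) :
    f ∈ Eomega G ω ↔
      ∀ s : ℕ, gnorm (((G.lapMatrix ℝ) ^ s).mulVec f) ≤ ω ^ s * gnorm f :=
  stmt_2_general G ω hω f
end

section
/- Let G be a finite graph with Laplacian L, S ⊂ V a Λ-set, U = V ∖ S, and 0 < ω < 1/Λ. Then there exist weights σ_u ∈ ℝ, u ∈ U, such that for every f ∈ E_ω(L), ∑_{v∈V} f(v) = ∑_{u∈U} f(u) σ_u. -/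
/-!
Eigenvalues of `L` are nonnegative and eigenvectors for distinct eigenvalues are orthogonal, so
every `f ∈ E_ω(L)` satisfies `‖Lf‖ ≤ ω‖f‖`. If moreover `f` vanishes on `U`, i.e. is supported in the
`Λ`-set `S`, then `‖f‖ ≤ Λ‖Lf‖ ≤ Λω‖f‖` with `Λω < 1`, so `f = 0`. Hence restriction to `U` is
injective on `E_ω(L)`, and the functional `f ↦ ∑ f(v)` factors through it.
-/

open Matrix

theorem sum_dotProduct_sum_of_orthogonal {n ι R : Type*} [Fintype n]
    [NonUnitalNonAssocSemiring R] (s : Finset ι) (v : ι → n → R)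
    (h : ∀ i ∈ s, ∀ j ∈ s, i ≠ j → v i ⬝ᵥ v j = 0) :
    (∑ i ∈ s, v i) ⬝ᵥ (∑ i ∈ s, v i) = ∑ i ∈ s, v i ⬝ᵥ v i := by
  rw [sum_dotProduct]
  refine Finset.sum_congr rfl fun i hi => ?_
  rw [dotProduct_sum]
  exact Finset.sum_eq_single_of_mem i hi fun j hj hji => h i hi j hj hji.symm

namespace Matrix

variable {n : Type*} [Fintype n]

theorem IsSymm.dotProduct_mulVec_comm {R : Type*} [CommSemiring R] {A : Matrix n n R}
    (hA : A.IsSymm) (f g : n → R) : A *ᵥ f ⬝ᵥ g = f ⬝ᵥ A *ᵥ g := by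
  rw [dotProduct_mulVec, ← hA.eq, vecMul_transpose, hA.eq]

theorem IsSymm.dotProduct_eq_zero_of_eigenvalue_ne {R : Type*} [CommRing R] [IsDomain R]
    {A : Matrix n n R} (hA : A.IsSymm) {f g : n → R} {μ ν : R}
    (hf : A *ᵥ f = μ • f) (hg : A *ᵥ g = ν • g) (hμν : μ ≠ ν) : f ⬝ᵥ g = 0 := by
  have h := hA.dotProduct_mulVec_comm f g
  rw [hf, hg, smul_dotProduct, dotProduct_smul, smul_eq_mul, smul_eq_mul] at h
  exact (mul_eq_zero.mp (sub_mul μ ν (f ⬝ᵥ g) ▸ sub_eq_zero.mpr h)).resolve_left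
    (sub_ne_zero.mpr hμν)

theorem PosSemidef.eigenvalue_nonneg {A : Matrix n n ℝ} (hA : A.PosSemidef) {f : n → ℝ}
    (hf0 : f ≠ 0) {μ : ℝ} (hf : A *ᵥ f = μ • f) : 0 ≤ μ := by
  have hpos : 0 < f ⬝ᵥ f :=
    lt_of_le_of_ne (by simpa using dotProduct_star_self_nonneg f)
      (Ne.symm (dotProduct_self_eq_zero.not.mpr hf0))
  have hnonneg := hA.dotProduct_mulVec_nonneg f
  rw [star_trivial, hf, dotProduct_smul, smul_eq_mul] at hnonneg
  exact nonneg_of_mul_nonneg_left hnonneg hpos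

theorem IsSymm.dotProduct_mulVec_self_le {A : Matrix n n ℝ} (hA : A.IsSymm) {c : ℝ}
    {f : n → ℝ} (hf : f ∈ Submodule.span ℝ {g | ∃ μ : ℝ, μ ^ 2 ≤ c ∧ A *ᵥ g = μ • g}) :
    A *ᵥ f ⬝ᵥ A *ᵥ f ≤ c * (f ⬝ᵥ f) := by
  let p : {μ : ℝ // μ ^ 2 ≤ c} → Submodule ℝ (n → ℝ) :=
    fun μ => Module.End.eigenspace A.mulVecLin μ
  have hspan : Submodule.span ℝ {g | ∃ μ : ℝ, μ ^ 2 ≤ c ∧ A *ᵥ g = μ • g} ≤ ⨆ μ, p μ :=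
    Submodule.span_le.mpr fun g ⟨μ, hμ, hg⟩ =>
      Submodule.mem_iSup_of_mem ⟨μ, hμ⟩ (Module.End.mem_eigenspace_iff.mpr hg)
  obtain ⟨d, hd, rfl⟩ := (Submodule.mem_iSup_iff_exists_finsupp p f).mp (hspan hf)
  have heig (i) : A *ᵥ d i = i.1 • d i := Module.End.mem_eigenspace_iff.mp (hd i)
  have horth : ∀ i ∈ d.support, ∀ j ∈ d.support, i ≠ j → d i ⬝ᵥ d j = 0 :=
    fun i _ j _ hij => hA.dotProduct_eq_zero_of_eigenvalue_ne (heig i) (heig j)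
      (fun h => hij (Subtype.ext h))
  have hsmul_orth : ∀ i ∈ d.support, ∀ j ∈ d.support, i ≠ j →
      i.1 • d i ⬝ᵥ j.1 • d j = 0 := fun i hi j hj hij => by
    rw [smul_dotProduct, dotProduct_smul, horth i hi j hj hij, smul_zero, smul_zero]
  change A *ᵥ (∑ i ∈ d.support, d i) ⬝ᵥ A *ᵥ (∑ i ∈ d.support, d i) ≤
    c * ((∑ i ∈ d.support, d i) ⬝ᵥ (∑ i ∈ d.support, d i))
  simp only [mulVec_sum, heig]
  rw [sum_dotProduct_sum_of_orthogonal _ _ hsmul_orth, sum_dotProduct_sum_of_orthogonal _ _ horth,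
    Finset.mul_sum]
  refine Finset.sum_le_sum fun i _ => ?_
  rw [smul_dotProduct, dotProduct_smul, smul_eq_mul, smul_eq_mul, ← mul_assoc, ← sq]
  exact mul_le_mul_of_nonneg_right i.2 (by simpa using dotProduct_star_self_nonneg (d i))

end Matrix

theorem gnorm_eq_sqrt_dotProduct {V : Type*} [Fintype V] (f : V → ℝ) :
    gnorm f = Real.sqrt (f ⬝ᵥ f) := by
  simp only [gnorm, dotProduct, sq]

theorem gnorm_eq_zero {V : Type*} [Fintype V] {f : V → ℝ} : gnorm f = 0 ↔ f = 0 := by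
  rw [gnorm_eq_sqrt_dotProduct, Real.sqrt_eq_zero (by simpa using dotProduct_star_self_nonneg f),
    dotProduct_self_eq_zero]

theorem gnorm_lapMatrix_mulVec_le {V : Type*} [Fintype V] [DecidableEq V]
    (G : SimpleGraph V) [DecidableRel G.Adj] {ω : ℝ} (hω : 0 ≤ ω) {f : V → ℝ}
    (hf : f ∈ Eomega G ω) : gnorm (G.lapMatrix ℝ *ᵥ f) ≤ ω * gnorm f := by
  have hspan : Eomega G ω ≤
      Submodule.span ℝ {g | ∃ μ : ℝ, μ ^ 2 ≤ ω ^ 2 ∧ G.lapMatrix ℝ *ᵥ g = μ • g} :=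
    Submodule.span_mono fun g ⟨hg0, μ, hμω, hg⟩ =>
      ⟨μ, pow_le_pow_left₀ ((G.posSemidef_lapMatrix ℝ).eigenvalue_nonneg hg0 hg) hμω 2, hg⟩
  rw [gnorm_eq_sqrt_dotProduct, gnorm_eq_sqrt_dotProduct, ← Real.sqrt_sq hω,
    ← Real.sqrt_mul (sq_nonneg ω)]
  exact Real.sqrt_le_sqrt ((G.isSymm_lapMatrix ℝ).dotProduct_mulVec_self_le (hspan hf))

theorem Submodule.exists_cubature_weights {K V : Type*} [Field K] [DecidableEq V]
    (E : Submodule K (V → K)) (U : Finset V) (hE : ∀ f ∈ E, (∀ u ∈ U, f u = 0) → f = 0)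
    (ℓ : (V → K) →ₗ[K] K) : ∃ σ : V → K, ∀ f ∈ E, ℓ f = ∑ u ∈ U, f u * σ u := by
  let R : E →ₗ[K] (U → K) := LinearMap.funLeft K K ((↑) : U → V) ∘ₗ E.subtype
  have hR : LinearMap.ker R = ⊥ := LinearMap.ker_eq_bot'.mpr fun f hf =>
    Subtype.ext (hE f f.2 fun u hu => congrFun hf ⟨u, hu⟩)
  obtain ⟨g, hg⟩ := R.exists_leftInverse_of_injective hR
  let φ := ℓ ∘ₗ E.subtype ∘ₗ g
  refine ⟨fun v => φ fun u => if v = u then 1 else 0, fun f hf => ?_⟩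
  have hφ : ℓ f = φ (R ⟨f, hf⟩) := by
    simp only [φ, LinearMap.comp_apply, ← LinearMap.comp_apply g R, hg, LinearMap.id_apply,
      Submodule.subtype_apply]
  rw [hφ, φ.pi_apply_eq_sum_univ, ← Finset.sum_coe_sort U]
  refine Finset.sum_congr rfl fun u _ => ?_
  simp only [R, LinearMap.comp_apply, LinearMap.funLeft_apply, Submodule.subtype_apply,
    smul_eq_mul, Subtype.ext_iff]

/-- If `S = V \ U` is a `Λ`-set and `0 < ω < 1/Λ`, there exist weights `σ_u` such that
the exact cubature formula `∑_{v∈V} f(v) = ∑_{u∈U} f(u) σ_u` holds on `E_ω(L)`. -/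
theorem stmt_5 {V : Type*} [Fintype V] [DecidableEq V]
    (G : SimpleGraph V) [DecidableRel G.Adj]
    (U : Finset V) (Λ : ℝ) (hΛ : 0 < Λ)
    (hS : ∀ φ : V → ℝ, (∀ v ∈ U, φ v = 0) →
      gnorm φ ≤ Λ * gnorm ((G.lapMatrix ℝ).mulVec φ))
    (ω : ℝ) (hω0 : 0 < ω) (hω : ω < 1 / Λ) :
    ∃ σ : V → ℝ, ∀ f ∈ Eomega G ω, ∑ v, f v = ∑ u ∈ U, f u * σ u := by
  have hΛω : Λ * ω < 1 := by rwa [lt_div_iff₀ hΛ, mul_comm] at hω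
  have hunique : ∀ f ∈ Eomega G ω, (∀ u ∈ U, f u = 0) → f = 0 := fun f hf hfU => by
    have hle : gnorm f ≤ Λ * ω * gnorm f := calc
      gnorm f ≤ Λ * gnorm (G.lapMatrix ℝ *ᵥ f) := hS f hfU
      _ ≤ Λ * (ω * gnorm f) := mul_le_mul_of_nonneg_left
        (gnorm_lapMatrix_mulVec_le G hω0.le hf) hΛ.le
      _ = Λ * ω * gnorm f := (mul_assoc _ _ _).symm
    have hnonneg : 0 ≤ gnorm f := Real.sqrt_nonneg _
    exact gnorm_eq_zero.mp (by nlinarith)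
  simpa using (Eomega G ω).exists_cubature_weights U hunique (∑ v, LinearMap.proj v)
end

section
/- Let G be a finite graph with Laplacian L, ε > 0, k ∈ ℕ, and U ⊂ V. The variational interpolation problem — minimize ‖(εI+L)^k Y‖ over Y ∈ L₂(G) with Y(u) = y_u for u ∈ U — has a unique solution, and this solution Y satisfies (εI+L)^{2k} Y = ∑_{u∈U} α_u δ_u for some scalars α_u ∈ ℝ, where δ_u is the indicator of the vertex u. -/
open Matrix

/-- The operator `εI + L` used in the definition of variational splines. -/
noncomputable def splineOp {V : Type*} [Fintype V] [DecidableEq V]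
    (G : SimpleGraph V) [DecidableRel G.Adj] (ε : ℝ) : Matrix V V ℝ :=
  ε • (1 : Matrix V V ℝ) + G.lapMatrix ℝ

set_option maxHeartbeats 1000000 in
/-- The variational interpolation problem (minimize `‖(εI+L)^k Y‖` subject to
`Y(u) = y_u` on `U`) has a unique solution `Y`, and `Y` satisfies
`(εI+L)^{2k} Y = ∑_{u∈U} α_u δ_u` for some scalars `α_u`. -/
theorem stmt_7 {V : Type*} [Fintype V] [DecidableEq V]
    (G : SimpleGraph V) [DecidableRel G.Adj]
    (U : Finset V) (k : ℕ) (ε : ℝ) (hε : 0 < ε) (y : V → ℝ) :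
    ∃ Y : V → ℝ,
      ((∀ u ∈ U, Y u = y u) ∧
        ∀ Z : V → ℝ, (∀ u ∈ U, Z u = y u) →
          gnorm (((splineOp G ε) ^ k).mulVec Y) ≤ gnorm (((splineOp G ε) ^ k).mulVec Z)) ∧
      (∀ Y' : V → ℝ,
        ((∀ u ∈ U, Y' u = y u) ∧
          ∀ Z : V → ℝ, (∀ u ∈ U, Z u = y u) →
            gnorm (((splineOp G ε) ^ k).mulVec Y') ≤ gnorm (((splineOp G ε) ^ k).mulVec Z)) →
        Y' = Y) ∧
      (∃ α : V → ℝ,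
        ((splineOp G ε) ^ (2 * k)).mulVec Y =
          fun v => ∑ u ∈ U, α u * (if v = u then 1 else 0)) := by
  classical
  set M : Matrix V V ℝ := splineOp G ε with hMdef
  have hMsymm : M.IsSymm := by
    rw [hMdef, splineOp, Matrix.IsSymm, transpose_add, transpose_smul, transpose_one,
      (G.isSymm_lapMatrix (R := ℝ))]
  have hMpd : M.PosDef := by
    rw [hMdef, splineOp]
    refine Matrix.PosDef.add_posSemidef ?_ (G.posSemidef_lapMatrix ℝ)
    rw [Matrix.smul_one_eq_diagonal]
    exact Matrix.posDef_diagonal_iff.mpr fun _ => hε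
  set B : Matrix V V ℝ := M ^ k with hBdef
  have hBsymm : Bᵀ = B := hMsymm.pow k
  have hBinj : Function.Injective (B.mulVec) :=
    Matrix.mulVec_injective_iff_isUnit.mpr (hMpd.isUnit.pow k)
  set A : Matrix V V ℝ := M ^ (2 * k) with hAdef
  have hAB : ∀ x : V → ℝ, A *ᵥ x = B *ᵥ (B *ᵥ x) := by
    intro x
    rw [mulVec_mulVec, hBdef, ← pow_add, hAdef, two_mul]
  have keydot : ∀ x g : V → ℝ, (B *ᵥ x) ⬝ᵥ (B *ᵥ g) = (A *ᵥ x) ⬝ᵥ g := by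
    intro x g
    rw [dotProduct_mulVec, ← mulVec_transpose, hBsymm, hAB]
  -- the subspace of functions vanishing on U
  let W : Submodule ℝ (V → ℝ) :=
    { carrier := {f | ∀ u ∈ U, f u = 0}
      add_mem' := fun hf hg u hu => by
        simp only [Set.mem_setOf_eq] at hf hg
        simp [hf u hu, hg u hu]
      zero_mem' := fun u _ => rfl
      smul_mem' := fun c f hf u hu => by
        simp only [Set.mem_setOf_eq] at hf
        simp [hf u hu] }
  have memW : ∀ f : V → ℝ, f ∈ W ↔ ∀ u ∈ U, f u = 0 := fun f => Iff.rfl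
  -- the Euler-Lagrange endomorphism of W
  let Φ : W →ₗ[ℝ] W :=
    { toFun := fun w => ⟨fun v => if v ∈ U then 0 else (A *ᵥ (w : V → ℝ)) v,
        fun u hu => by simp [hu]⟩
      map_add' := fun w₁ w₂ => Subtype.ext (funext fun v => by
        by_cases hv : v ∈ U <;> simp [hv, Matrix.mulVec_add])
      map_smul' := fun c w => Subtype.ext (funext fun v => by
        by_cases hv : v ∈ U <;> simp [hv, Matrix.mulVec_smul]) }
  have hΦinj : Function.Injective Φ := by
    have hker : ∀ w : W, Φ w = 0 → w = 0 := by
      intro w hw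
      have hoff : ∀ v, v ∉ U → (A *ᵥ (w : V → ℝ)) v = 0 := by
        intro v hv
        have h := congrArg (fun f : W => (f : V → ℝ) v) hw
        simpa [Φ, hv] using h
      have hz : (B *ᵥ (w : V → ℝ)) ⬝ᵥ (B *ᵥ (w : V → ℝ)) = 0 := by
        rw [keydot, dotProduct]
        refine Finset.sum_eq_zero fun v _ => ?_
        by_cases hv : v ∈ U
        · simp [w.2 v hv]
        · simp [hoff v hv]
      have hBw : B *ᵥ (w : V → ℝ) = 0 := by
        rw [dotProduct] at hz
        funext v
        have := (Finset.sum_eq_zero_iff_of_nonneg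
          (fun v _ => mul_self_nonneg ((B *ᵥ (w : V → ℝ)) v))).mp hz v (Finset.mem_univ v)
        exact mul_self_eq_zero.mp this
      have : (w : V → ℝ) = 0 := hBinj (by simpa using hBw)
      exact Subtype.ext this
    intro a b hab
    have h0 : Φ (a - b) = 0 := by rw [map_sub, hab, sub_self]
    have := hker _ h0
    exact sub_eq_zero.mp this
  have hΦsurj : Function.Surjective Φ := LinearMap.injective_iff_surjective.mp hΦinj
  -- solve for the spline
  obtain ⟨w, hw⟩ := hΦsurj ⟨fun v => if v ∈ U then (0 : ℝ) else -((A *ᵥ y) v),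
    fun u hu => by simp [hu]⟩
  set Y : V → ℝ := y + (w : V → ℝ) with hYdef
  have hYU : ∀ u ∈ U, Y u = y u := by
    intro u hu
    simp [hYdef, w.2 u hu]
  have hEuler : ∀ v, v ∉ U → (A *ᵥ Y) v = 0 := by
    intro v hv
    have h := congrArg (fun f : W => (f : V → ℝ) v) hw
    simp only [Φ, LinearMap.coe_mk, AddHom.coe_mk, if_neg hv] at h
    rw [hYdef, Matrix.mulVec_add, Pi.add_apply, h]
    ring
  have hkey : ∀ g : V → ℝ, (∀ u ∈ U, g u = 0) → (B *ᵥ Y) ⬝ᵥ (B *ᵥ g) = 0 := by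
    intro g hg
    rw [keydot, dotProduct]
    refine Finset.sum_eq_zero fun v _ => ?_
    by_cases hv : v ∈ U
    · simp [hg v hv]
    · simp [hEuler v hv]
  -- pythagoras expansion
  have expand : ∀ Z : V → ℝ, (∀ u ∈ U, Z u = y u) →
      ∑ v, (B *ᵥ Z) v ^ 2 = ∑ v, (B *ᵥ Y) v ^ 2 + ∑ v, (B *ᵥ (Z - Y)) v ^ 2 := by
    intro Z hZ
    have hg : ∀ u ∈ U, (Z - Y) u = 0 := by
      intro u hu
      simp [hZ u hu, hYU u hu]
    have hZY : Y + (Z - Y) = Z := by abel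
    have hBZ : B *ᵥ Z = B *ᵥ Y + B *ᵥ (Z - Y) := by
      rw [← Matrix.mulVec_add, hZY]
    have hc : ∑ v, (B *ᵥ Y) v * (B *ᵥ (Z - Y)) v = 0 := by
      have := hkey (Z - Y) hg
      rwa [dotProduct] at this
    calc ∑ v, (B *ᵥ Z) v ^ 2
        = ∑ v, ((B *ᵥ Y) v ^ 2 + (B *ᵥ (Z - Y)) v ^ 2
            + 2 * ((B *ᵥ Y) v * (B *ᵥ (Z - Y)) v)) := by
          rw [hBZ]
          exact Finset.sum_congr rfl fun v _ => by simp [Pi.add_apply]; ring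
      _ = ∑ v, (B *ᵥ Y) v ^ 2 + ∑ v, (B *ᵥ (Z - Y)) v ^ 2 := by
          rw [Finset.sum_add_distrib, Finset.sum_add_distrib, ← Finset.mul_sum, hc]
          ring
  have hmin : ∀ Z : V → ℝ, (∀ u ∈ U, Z u = y u) →
      gnorm (B *ᵥ Y) ≤ gnorm (B *ᵥ Z) := by
    intro Z hZ
    unfold gnorm
    apply Real.sqrt_le_sqrt
    rw [expand Z hZ]
    have := Finset.sum_nonneg fun v (_ : v ∈ Finset.univ) => sq_nonneg ((B *ᵥ (Z - Y)) v)
    linarith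
  refine ⟨Y, ⟨hYU, hmin⟩, ?_, ⟨A *ᵥ Y, ?_⟩⟩
  · rintro Y' ⟨hY'U, hY'min⟩
    have h1 : gnorm (B *ᵥ Y') ≤ gnorm (B *ᵥ Y) := hY'min Y hYU
    have h2 : ∑ v, (B *ᵥ Y') v ^ 2 ≤ ∑ v, (B *ᵥ Y) v ^ 2 := by
      unfold gnorm at h1
      exact (Real.sqrt_le_sqrt_iff (Finset.sum_nonneg
        fun v _ => sq_nonneg ((B *ᵥ Y) v))).mp h1
    have h3 := expand Y' hY'U
    have h4 : ∑ v, (B *ᵥ (Y' - Y)) v ^ 2 = 0 := by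
      have := Finset.sum_nonneg fun v (_ : v ∈ Finset.univ) => sq_nonneg ((B *ᵥ (Y' - Y)) v)
      linarith
    have h5 : B *ᵥ (Y' - Y) = 0 := by
      funext v
      have := (Finset.sum_eq_zero_iff_of_nonneg
        (fun v _ => sq_nonneg ((B *ᵥ (Y' - Y)) v))).mp h4 v (Finset.mem_univ v)
      exact pow_eq_zero_iff (n := 2) (by norm_num) |>.mp this
    have h6 : Y' - Y = 0 := hBinj (by simpa using h5)
    exact sub_eq_zero.mp h6
  · funext v
    simp only [mul_ite, mul_one, mul_zero]
    rw [Finset.sum_ite_eq U v (fun u => (A *ᵥ Y) u)]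
    by_cases hv : v ∈ U
    · simp [hv]
    · simp [hv, hEuler v hv]
end

section
/- Let G be a finite graph with Laplacian L, U ⊂ V with S = V∖S a Λ-set, ε > 0, and k = 2^l, l ∈ ℕ. If Y_{k,ε}^{U,f} denotes the variational spline interpolating f on U, then ‖f − Y_{k,ε}^{U,f}‖ ≤ 2 Λ^k ‖(εI+L)^k f‖ for every f ∈ L₂(G). -/
open Matrix

/-!
Put `φ = f - Y`, which vanishes on `U`, and `A = εI + L`. Since `L` is positive semidefinite,
`‖Lφ‖ ≤ ‖Aφ‖`, so the `Λ`-set inequality gives `‖φ‖ ≤ Λ ‖Aφ‖`. For a symmetric `M`,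
`‖Mφ‖² = ⟨φ, M²φ⟩ ≤ ‖φ‖ ‖M²φ‖`, which turns `‖φ‖ ≤ c ‖Mφ‖` into `‖φ‖ ≤ c² ‖M²φ‖`; doubling
`l` times yields `‖φ‖ ≤ Λ^k ‖A^k φ‖` for `k = 2^l`. Finally `‖A^k Y‖ ≤ ‖A^k f‖` because `f`
itself interpolates `f` on `U`, so `‖A^k φ‖ ≤ 2 ‖A^k f‖`.
-/

section gnorm

variable {V : Type*} [Fintype V]

lemma gnorm_eq_norm_toLp_s8 (f : V → ℝ) : gnorm f = ‖(WithLp.toLp 2 f : EuclideanSpace ℝ V)‖ := by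
  simp [gnorm, EuclideanSpace.norm_eq]

lemma gnorm_nonneg (f : V → ℝ) : 0 ≤ gnorm f := Real.sqrt_nonneg _

lemma gnorm_sq (f : V → ℝ) : gnorm f ^ 2 = f ⬝ᵥ f := by
  rw [gnorm, Real.sq_sqrt (Finset.sum_nonneg fun v _ => sq_nonneg (f v))]
  simp [dotProduct, sq]

lemma gnorm_sub_le (f g : V → ℝ) : gnorm (f - g) ≤ gnorm f + gnorm g := by
  simpa only [gnorm_eq_norm_toLp_s8, WithLp.toLp_sub] using norm_sub_le _ _

lemma dotProduct_le_gnorm_mul_gnorm (f g : V → ℝ) : f ⬝ᵥ g ≤ gnorm f * gnorm g := by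
  rw [gnorm_eq_norm_toLp_s8, gnorm_eq_norm_toLp_s8, dotProduct_comm, ← star_trivial f,
    ← EuclideanSpace.inner_toLp_toLp]
  exact real_inner_le_norm _ _

lemma gnorm_le_gnorm_iff (f g : V → ℝ) : gnorm f ≤ gnorm g ↔ f ⬝ᵥ f ≤ g ⬝ᵥ g := by
  rw [← gnorm_sq, ← gnorm_sq, sq_le_sq₀ (gnorm_nonneg f) (gnorm_nonneg g)]

lemma gnorm_mulVec_sq_le {M : Matrix V V ℝ} (hM : M.IsSymm) (φ : V → ℝ) :
    gnorm (M *ᵥ φ) ^ 2 ≤ gnorm φ * gnorm ((M * M) *ᵥ φ) := by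
  rw [gnorm_sq, ← mulVec_mulVec, dotProduct_mulVec, ← mulVec_transpose, hM.eq, dotProduct_comm]
  exact dotProduct_le_gnorm_mul_gnorm _ _

lemma gnorm_le_sq_mul_gnorm_mul_self_mulVec {M : Matrix V V ℝ} (hM : M.IsSymm) {c : ℝ}
    {φ : V → ℝ} (h : gnorm φ ≤ c * gnorm (M *ᵥ φ)) :
    gnorm φ ≤ c ^ 2 * gnorm ((M * M) *ᵥ φ) := by
  rcases (gnorm_nonneg φ).eq_or_lt with h0 | hpos
  · rw [← h0]; exact mul_nonneg (sq_nonneg c) (gnorm_nonneg _)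
  refine le_of_mul_le_mul_left ?_ hpos
  calc gnorm φ * gnorm φ ≤ (c * gnorm (M *ᵥ φ)) ^ 2 := by
        rw [sq]; exact mul_self_le_mul_self hpos.le h
    _ = c ^ 2 * gnorm (M *ᵥ φ) ^ 2 := by ring
    _ ≤ c ^ 2 * (gnorm φ * gnorm ((M * M) *ᵥ φ)) := by gcongr; exact gnorm_mulVec_sq_le hM φ
    _ = gnorm φ * (c ^ 2 * gnorm ((M * M) *ᵥ φ)) := by ring

end gnorm

lemma gnorm_le_pow_two_pow_mul_gnorm_pow_two_pow_mulVec {V : Type*} [Fintype V] [DecidableEq V]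
    {M : Matrix V V ℝ} (hM : M.IsSymm)
    {c : ℝ} {φ : V → ℝ} (h : gnorm φ ≤ c * gnorm (M *ᵥ φ)) (m : ℕ) :
    gnorm φ ≤ c ^ 2 ^ m * gnorm ((M ^ 2 ^ m) *ᵥ φ) := by
  induction m with
  | zero => simpa using h
  | succ m ih =>
    have := gnorm_le_sq_mul_gnorm_mul_self_mulVec (hM.pow (2 ^ m)) ih
    rwa [← pow_mul, ← pow_add, ← two_mul, ← pow_succ', ← pow_succ] at this

lemma gnorm_mulVec_le_gnorm_smul_one_add_mulVec {V : Type*} [Fintype V] [DecidableEq V]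
    {M : Matrix V V ℝ} (hM : M.PosSemidef) {ε : ℝ} (hε : 0 ≤ ε) (φ : V → ℝ) :
    gnorm (M *ᵥ φ) ≤ gnorm ((ε • (1 : Matrix V V ℝ) + M) *ᵥ φ) := by
  have hquad : 0 ≤ φ ⬝ᵥ M *ᵥ φ := by simpa using hM.dotProduct_mulVec_nonneg φ
  have hφ : 0 ≤ φ ⬝ᵥ φ := by rw [← gnorm_sq]; positivity
  rw [gnorm_le_gnorm_iff, add_mulVec, smul_mulVec, one_mulVec]
  simp only [add_dotProduct, dotProduct_add, smul_dotProduct, dotProduct_smul, smul_eq_mul,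
    dotProduct_comm (M *ᵥ φ) φ]
  linarith [mul_nonneg hε hquad, mul_nonneg (mul_nonneg hε hε) hφ]

lemma isSymm_splineOp {V : Type*} [Fintype V] [DecidableEq V] (G : SimpleGraph V)
    [DecidableRel G.Adj] (ε : ℝ) : (splineOp G ε).IsSymm :=
  (isSymm_one.smul ε).add (G.isSymm_lapMatrix (R := ℝ))

/-- If `S = V \ U` is a `Λ`-set and `k = 2^l`, then the variational spline `Y`
interpolating `f` on `U` satisfies `‖f − Y‖ ≤ 2 Λ^k ‖(εI+L)^k f‖`. -/
theorem stmt_8 {V : Type*} [Fintype V] [DecidableEq V]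
    (G : SimpleGraph V) [DecidableRel G.Adj]
    (U : Finset V) (Λ : ℝ) (hΛ : 0 < Λ)
    (hS : ∀ φ : V → ℝ, (∀ v ∈ U, φ v = 0) →
      gnorm φ ≤ Λ * gnorm ((G.lapMatrix ℝ).mulVec φ))
    (ε : ℝ) (hε : 0 < ε) (l : ℕ)
    (f Y : V → ℝ)
    (hYI : ∀ u ∈ U, Y u = f u)
    (hYM : ∀ Z : V → ℝ, (∀ u ∈ U, Z u = f u) →
      gnorm (((splineOp G ε) ^ (2 ^ l)).mulVec Y) ≤
        gnorm (((splineOp G ε) ^ (2 ^ l)).mulVec Z)) :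
    gnorm (f - Y) ≤ 2 * Λ ^ (2 ^ l) * gnorm (((splineOp G ε) ^ (2 ^ l)).mulVec f) := by
  set A := splineOp G ε ^ 2 ^ l
  have hbase : gnorm (f - Y) ≤ Λ * gnorm (splineOp G ε *ᵥ (f - Y)) :=
    (hS _ fun v hv => by simp [hYI v hv]).trans <| mul_le_mul_of_nonneg_left
      (gnorm_mulVec_le_gnorm_smul_one_add_mulVec (G.posSemidef_lapMatrix ℝ) hε.le _) hΛ.le
  have hA : gnorm (A *ᵥ (f - Y)) ≤ 2 * gnorm (A *ᵥ f) := by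
    calc gnorm (A *ᵥ (f - Y)) ≤ gnorm (A *ᵥ f) + gnorm (A *ᵥ Y) := by
          rw [mulVec_sub]; exact gnorm_sub_le _ _
      _ ≤ 2 * gnorm (A *ᵥ f) := by linarith [hYM f fun _ _ => rfl]
  calc gnorm (f - Y) ≤ Λ ^ 2 ^ l * gnorm (A *ᵥ (f - Y)) :=
        gnorm_le_pow_two_pow_mul_gnorm_pow_two_pow_mulVec (isSymm_splineOp G ε) hbase l
    _ ≤ Λ ^ 2 ^ l * (2 * gnorm (A *ᵥ f)) := by gcongr
    _ = 2 * Λ ^ 2 ^ l * gnorm (A *ᵥ f) := by ring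
end

section
/- Let G be a finite graph with Laplacian L, U ⊂ V, f ∈ L₂(G), k ∈ ℕ, ε > 0, and let Y = Y_{k,ε}^{U,f} be the variational spline interpolating f on U. If Y + h ∈ Q(U,f,k,ε,K) for some h ∈ L₂(G), then also Y − h ∈ Q(U,f,k,ε,K); i.e., Y is a center of symmetry of Q(U,f,k,ε,K) whenever K ≥ ‖(εI+L)^k Y‖. -/
open Matrix

/-- The interpolating variational spline `Y` is a center of symmetry of
`Q(U,f,k,ε,K)`: if `Y + h ∈ Q(U,f,k,ε,K)` then also `Y − h ∈ Q(U,f,k,ε,K)`. -/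
theorem stmt_13 {V : Type*} [Fintype V] [DecidableEq V]
    (G : SimpleGraph V) [DecidableRel G.Adj]
    (U : Finset V) (f : V → ℝ) (k : ℕ) (ε : ℝ) (hε : 0 < ε) (K : ℝ)
    (Y : V → ℝ)
    (hYI : ∀ u ∈ U, Y u = f u)
    (hYM : ∀ Z : V → ℝ, (∀ u ∈ U, Z u = f u) →
      gnorm (((splineOp G ε) ^ k).mulVec Y) ≤ gnorm (((splineOp G ε) ^ k).mulVec Z))
    (hK : gnorm (((splineOp G ε) ^ k).mulVec Y) ≤ K)
    (h : V → ℝ)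
    (hQ : (Y + h) ∈ {g : V → ℝ | (∀ u ∈ U, g u = f u) ∧
        gnorm (((splineOp G ε) ^ k).mulVec g) ≤ K}) :
    (Y - h) ∈ {g : V → ℝ | (∀ u ∈ U, g u = f u) ∧
        gnorm (((splineOp G ε) ^ k).mulVec g) ≤ K} := by
  obtain ⟨hQI, hQN⟩ := hQ
  -- h vanishes on U
  have hhU : ∀ u ∈ U, h u = 0 := by
    intro u hu
    have := hQI u hu
    have := hYI u hu
    simp only [Pi.add_apply] at *
    linarith
  set A := (splineOp G ε) ^ k with hA
  set a := A.mulVec Y with ha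
  set b := A.mulVec h with hb
  set c := ∑ v, a v * b v with hc
  set d := ∑ v, b v ^ 2 with hd
  clear_value A a b c d
  have hd0 : 0 ≤ d := by
    rw [hd]; exact Finset.sum_nonneg fun v _ => sq_nonneg _
  -- minimality at Y + t•h gives 0 ≤ 2tc + t²d for all t
  have key : ∀ t : ℝ, 0 ≤ 2 * t * c + t ^ 2 * d := by
    intro t
    have hint : ∀ u ∈ U, (Y + t • h) u = f u := by
      intro u hu
      simp [hYI u hu, hhU u hu]
    have hmin := hYM (Y + t • h) hint
    have hAv : A.mulVec (Y + t • h) = fun v => a v + t * b v := by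
      funext v
      simp [ha, hb, Matrix.mulVec_add, Matrix.mulVec_smul]
    rw [hAv] at hmin
    unfold gnorm at hmin
    have h1 : (∑ v, a v ^ 2) ≤ ∑ v, (a v + t * b v) ^ 2 := by
      exact (Real.sqrt_le_sqrt_iff (Finset.sum_nonneg fun v _ => sq_nonneg (a v + t * b v))).mp hmin
    have hexp : (∑ v, (a v + t * b v) ^ 2)
        = (∑ v, a v ^ 2) + 2 * t * c + t ^ 2 * d := by
      simp only [hc, hd, Finset.mul_sum]
      rw [← Finset.sum_add_distrib, ← Finset.sum_add_distrib]
      congr 1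
      funext v
      ring
    rw [hexp] at h1
    linarith
  -- conclude c = 0
  have hc0 : c = 0 := by
    by_contra hne
    have h1 := key (-c / (d + 1))
    have hd1 : (0:ℝ) < d + 1 := by linarith
    have hcc : 0 < c ^ 2 := by positivity
    have : 2 * (-c / (d + 1)) * c + (-c / (d + 1)) ^ 2 * d
        = (c ^ 2 * (-(d + 2))) / (d + 1) ^ 2 := by
      field_simp
      ring
    rw [this] at h1
    have hneg : (c ^ 2 * (-(d + 2))) / (d + 1) ^ 2 < 0 := by
      apply div_neg_of_neg_of_pos
      · nlinarith
      · positivity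
    linarith
  refine ⟨?_, ?_⟩
  · intro u hu
    simp [hYI u hu, hhU u hu]
  · have hAv : A.mulVec (Y - h) = fun v => a v - b v := by
      funext v
      simp [ha, hb, Matrix.mulVec_sub]
    have hAv' : A.mulVec (Y + h) = fun v => a v + b v := by
      funext v
      simp [ha, hb, Matrix.mulVec_add]
    rw [hAv'] at hQN
    rw [hAv]
    have heq : (∑ v, (a v - b v) ^ 2) = ∑ v, (a v + b v) ^ 2 := by
      have e1 : (∑ v, (a v - b v) ^ 2) = (∑ v, a v ^ 2) - 2 * c + d := by
        simp only [hc, hd, Finset.mul_sum]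
        rw [← Finset.sum_sub_distrib, ← Finset.sum_add_distrib]
        congr 1; funext v; ring
      have e2 : (∑ v, (a v + b v) ^ 2) = (∑ v, a v ^ 2) + 2 * c + d := by
        simp only [hc, hd, Finset.mul_sum]
        rw [← Finset.sum_add_distrib, ← Finset.sum_add_distrib]
        congr 1; funext v; ring
      rw [e1, e2, hc0]; ring
    unfold gnorm at *
    rw [heq]
    exact hQN
end

section
/- With U, f, k, ε, K as above and θ_u the spline cubature weights, for every g ∈ Q(U,f,k,ε,K): ∑_{u∈U} g(u) θ_u = (a+b)/2, where [a,b] = {∑_{v∈V} h(v) : h ∈ Q(U,f,k,ε,K)} is the interval of integrals of functions in Q(U,f,k,ε,K). -/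
/-!
The Lagrangian splines `L_u` are minimal-norm interpolants, hence `(εI+L)^k`-orthogonal to every
function vanishing on `U`; so is `W = ∑_u f(u) L_u`, which interpolates `f`. For `h ∈ Q`, `h - W`
vanishes on `U`, and by this orthogonality the reflection `h ↦ 2W - h` preserves
`‖(εI+L)^k ·‖`, hence maps `Q` onto itself while sending `∑_v h(v)` to `2 ∑_v W(v) - ∑_v h(v)`.
The set of integrals is therefore symmetric about `∑_v W(v) = ∑_u g(u) θ_u`; it is bounded since
`‖(εI+L)^k h‖ ≥ ε^k ‖h‖`, so its endpoints average to that centre.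
-/

open Matrix

namespace SplineCubature

variable {V : Type*}

section Norm

variable [Fintype V]

lemma gnorm_nonneg (f : V → ℝ) : 0 ≤ gnorm f := Real.sqrt_nonneg _

lemma gnorm_sq (f : V → ℝ) : gnorm f ^ 2 = f ⬝ᵥ f := by
  rw [gnorm, Real.sq_sqrt (by positivity)]
  simp only [dotProduct, sq]

lemma gnorm_le_gnorm_iff {f g : V → ℝ} : gnorm f ≤ gnorm g ↔ f ⬝ᵥ f ≤ g ⬝ᵥ g := by
  rw [← gnorm_sq, ← gnorm_sq, pow_le_pow_iff_left₀ (gnorm_nonneg f) (gnorm_nonneg g) two_ne_zero]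

lemma dotProduct_le_gnorm_mul_gnorm (f g : V → ℝ) : f ⬝ᵥ g ≤ gnorm f * gnorm g :=
  Real.sum_mul_le_sqrt_mul_sqrt _ f g

lemma sum_le_sqrt_card_mul_gnorm (f : V → ℝ) : ∑ v, f v ≤ √(Fintype.card V) * gnorm f := by
  simpa [gnorm] using Real.sum_mul_le_sqrt_mul_sqrt Finset.univ (fun _ ↦ (1 : ℝ)) f

lemma dotProduct_eq_zero_of_forall_le (x w : V → ℝ)
    (h : ∀ t : ℝ, x ⬝ᵥ x ≤ (x + t • w) ⬝ᵥ (x + t • w)) : x ⬝ᵥ w = 0 := by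
  have hquad : ∀ t : ℝ, 0 ≤ (w ⬝ᵥ w) * (t * t) + 2 * (x ⬝ᵥ w) * t + 0 := fun t ↦ by
    have := h t
    simp only [add_dotProduct, dotProduct_add, smul_dotProduct, dotProduct_smul,
      dotProduct_comm w x, smul_eq_mul] at this
    linarith
  have := discrim_le_zero hquad
  rw [discrim] at this
  nlinarith [sq_nonneg (x ⬝ᵥ w)]

section MatrixPow

variable [DecidableEq V]

lemma pow_mul_gnorm_le_gnorm_pow_mulVec {M : Matrix V V ℝ} {c : ℝ} (hc : 0 ≤ c)
    (hM : ∀ x, c * gnorm x ≤ gnorm (M *ᵥ x)) (k : ℕ) (x : V → ℝ) :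
    c ^ k * gnorm x ≤ gnorm ((M ^ k) *ᵥ x) := by
  induction k with
  | zero => simp
  | succ n ih =>
    calc c ^ (n + 1) * gnorm x = c * (c ^ n * gnorm x) := by ring
      _ ≤ c * gnorm ((M ^ n) *ᵥ x) := by gcongr
      _ ≤ gnorm (M *ᵥ ((M ^ n) *ᵥ x)) := hM _
      _ = gnorm ((M ^ (n + 1)) *ᵥ x) := by rw [mulVec_mulVec, ← pow_succ']

lemma mul_gnorm_le_gnorm_splineOp_mulVec (G : SimpleGraph V) [DecidableRel G.Adj] (ε : ℝ)
    (x : V → ℝ) : ε * gnorm x ≤ gnorm (splineOp G ε *ᵥ x) := by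
  have hL : 0 ≤ x ⬝ᵥ (G.lapMatrix ℝ *ᵥ x) := by
    simpa using (SimpleGraph.posSemidef_lapMatrix ℝ G).dotProduct_mulVec_nonneg x
  have hquad : gnorm x * (ε * gnorm x) ≤ gnorm x * gnorm (splineOp G ε *ᵥ x) :=
    calc gnorm x * (ε * gnorm x) = ε * (x ⬝ᵥ x) := by rw [← gnorm_sq]; ring
      _ ≤ x ⬝ᵥ (splineOp G ε *ᵥ x) := by
        simp only [splineOp, add_mulVec, smul_mulVec, one_mulVec, dotProduct_add,
          dotProduct_smul, smul_eq_mul]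
        linarith
      _ ≤ gnorm x * gnorm (splineOp G ε *ᵥ x) := dotProduct_le_gnorm_mul_gnorm _ _
  rcases (gnorm_nonneg x).eq_or_lt with hx | hx
  · rw [← hx, mul_zero]
    exact gnorm_nonneg _
  · exact le_of_mul_le_mul_left hquad hx

end MatrixPow

end Norm

section Interpolation

lemma sum_smul_apply_of_lagrange [DecidableEq V] {U : Finset V} {Lg : V → V → ℝ}
    (hLg : ∀ u ∈ U, ∀ w ∈ U, Lg u w = if w = u then 1 else 0) (f : V → ℝ) {w : V}
    (hw : w ∈ U) : (∑ u ∈ U, f u • Lg u) w = f w := by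
  simp only [Finset.sum_apply, Pi.smul_apply, smul_eq_mul]
  rw [Finset.sum_congr rfl fun u hu ↦ by rw [hLg u hu w hw]]
  simp [hw]

variable [Fintype V] (A : Matrix V V ℝ) (U : Finset V)

/-- The variational spline `Y^{U,f}_{k,ε}` of the paper is the `s` with
`IsInterpolatingSpline ((εI + L)^k) U f s`. -/
def IsInterpolatingSpline (f s : V → ℝ) : Prop :=
  (∀ u ∈ U, s u = f u) ∧ ∀ Z : V → ℝ, (∀ u ∈ U, Z u = f u) → gnorm (A *ᵥ s) ≤ gnorm (A *ᵥ Z)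

/-- The set `Q(U,f,k,ε,K)` of the paper, for `A = (εI + L)^k`. -/
def boundedInterpolants (f : V → ℝ) (K : ℝ) : Set (V → ℝ) :=
  {h | (∀ u ∈ U, h u = f u) ∧ gnorm (A *ᵥ h) ≤ K}

variable {A U}

lemma IsInterpolatingSpline.dotProduct_mulVec_eq_zero {f s : V → ℝ}
    (hs : IsInterpolatingSpline A U f s) {z : V → ℝ} (hz : ∀ u ∈ U, z u = 0) :
    (A *ᵥ s) ⬝ᵥ (A *ᵥ z) = 0 :=
  dotProduct_eq_zero_of_forall_le _ _ fun t ↦ by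
    have := hs.2 (s + t • z) fun u hu ↦ by simp [hs.1 u hu, hz u hu]
    rwa [gnorm_le_gnorm_iff, mulVec_add, mulVec_smul] at this

lemma dotProduct_mulVec_sum_smul_eq_zero {ι : Type*} (t : Finset ι) (c : ι → ℝ)
    (s : ι → V → ℝ) {z : V → ℝ} (hs : ∀ i ∈ t, (A *ᵥ s i) ⬝ᵥ (A *ᵥ z) = 0) :
    (A *ᵥ ∑ i ∈ t, c i • s i) ⬝ᵥ (A *ᵥ z) = 0 := by
  rw [mulVec_sum, sum_dotProduct]
  exact Finset.sum_eq_zero fun i hi ↦ by rw [mulVec_smul, smul_dotProduct, hs i hi, smul_zero]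

lemma gnorm_mulVec_two_smul_sub {s h : V → ℝ}
    (hs : ∀ z : V → ℝ, (∀ u ∈ U, z u = 0) → (A *ᵥ s) ⬝ᵥ (A *ᵥ z) = 0)
    (hsh : ∀ u ∈ U, h u = s u) : gnorm (A *ᵥ ((2 : ℝ) • s - h)) = gnorm (A *ᵥ h) := by
  have horth := hs (h - s) fun u hu ↦ by simp [hsh u hu]
  have hsq : (A *ᵥ ((2 : ℝ) • s - h)) ⬝ᵥ (A *ᵥ ((2 : ℝ) • s - h)) = (A *ᵥ h) ⬝ᵥ (A *ᵥ h) := by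
    have e₁ : (2 : ℝ) • s - h = s - (h - s) := by rw [two_smul]; abel
    have e₂ : h = s + (h - s) := by abel
    rw [e₁, mulVec_sub, e₂, mulVec_add, add_sub_cancel_left]
    simp only [add_dotProduct, dotProduct_add, sub_dotProduct, dotProduct_sub,
      dotProduct_comm (A *ᵥ (h - s)) (A *ᵥ s), horth]
    ring
  exact le_antisymm (gnorm_le_gnorm_iff.2 hsq.le) (gnorm_le_gnorm_iff.2 hsq.ge)

lemma two_mul_sub_mem_image_sum {f s : V → ℝ} {K : ℝ} (hsf : ∀ u ∈ U, s u = f u)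
    (hs : ∀ z : V → ℝ, (∀ u ∈ U, z u = 0) → (A *ᵥ s) ⬝ᵥ (A *ᵥ z) = 0) {t : ℝ}
    (ht : t ∈ (fun h : V → ℝ ↦ ∑ v, h v) '' boundedInterpolants A U f K) :
    2 * ∑ v, s v - t ∈ (fun h : V → ℝ ↦ ∑ v, h v) '' boundedInterpolants A U f K := by
  obtain ⟨h, ⟨hf, hK⟩, rfl⟩ := ht
  have hsh : ∀ u ∈ U, h u = s u := fun u hu ↦ (hf u hu).trans (hsf u hu).symm
  refine ⟨(2 : ℝ) • s - h, ⟨fun u hu ↦ ?_, ?_⟩, ?_⟩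
  · simp [hsh u hu, hsf u hu, two_mul]
  · rwa [gnorm_mulVec_two_smul_sub hs hsh]
  · simp [Finset.sum_sub_distrib, Finset.mul_sum]

lemma bddAbove_image_sum_boundedInterpolants {c : ℝ} (hc : 0 < c)
    (hA : ∀ x, c * gnorm x ≤ gnorm (A *ᵥ x)) (f : V → ℝ) (K : ℝ) :
    BddAbove ((fun h : V → ℝ ↦ ∑ v, h v) '' boundedInterpolants A U f K) := by
  refine ⟨√(Fintype.card V) * (K / c), Set.forall_mem_image.2 fun h hh ↦ ?_⟩
  refine (sum_le_sqrt_card_mul_gnorm h).trans ?_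
  gcongr
  rw [le_div_iff₀' hc]
  exact (hA h).trans hh.2

end Interpolation

lemma csInf_add_csSup_eq_of_two_mul_sub_mem {T : Set ℝ} {c : ℝ} (hne : T.Nonempty)
    (hbdd : BddAbove T) (hT : ∀ t ∈ T, 2 * c - t ∈ T) : sInf T + sSup T = 2 * c := by
  have hbddBelow : BddBelow T :=
    ⟨2 * c - sSup T, fun t ht ↦ by linarith [le_csSup hbdd (hT t ht)]⟩
  have hSup : sSup T ≤ 2 * c - sInf T :=
    csSup_le hne fun t ht ↦ by linarith [csInf_le hbddBelow (hT t ht)]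
  have hInf : 2 * c - sSup T ≤ sInf T :=
    le_csInf hne fun t ht ↦ by linarith [le_csSup hbdd (hT t ht)]
  linarith

end SplineCubature

open SplineCubature in
theorem stmt_14_general {V : Type*} [Fintype V] [DecidableEq V]
    (G : SimpleGraph V) [DecidableRel G.Adj]
    (U : Finset V) (f : V → ℝ) (k : ℕ) (ε : ℝ) (hε : 0 < ε) (K : ℝ)
    (Lg : V → V → ℝ)
    (hLgI : ∀ u ∈ U, ∀ w ∈ U, Lg u w = if w = u then 1 else 0)
    (hLgM : ∀ u ∈ U, ∀ Z : V → ℝ, (∀ w ∈ U, Z w = if w = u then 1 else 0) →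
      gnorm (((splineOp G ε) ^ k).mulVec (Lg u)) ≤ gnorm (((splineOp G ε) ^ k).mulVec Z))
    (g : V → ℝ)
    (hg : g ∈ {h : V → ℝ | (∀ u ∈ U, h u = f u) ∧
        gnorm (((splineOp G ε) ^ k).mulVec h) ≤ K}) :
    ∑ u ∈ U, g u * (∑ v, Lg u v) =
      (sInf ((fun h : V → ℝ => ∑ v, h v) ''
          {h : V → ℝ | (∀ u ∈ U, h u = f u) ∧
            gnorm (((splineOp G ε) ^ k).mulVec h) ≤ K}) +
       sSup ((fun h : V → ℝ => ∑ v, h v) ''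
          {h : V → ℝ | (∀ u ∈ U, h u = f u) ∧
            gnorm (((splineOp G ε) ^ k).mulVec h) ≤ K})) / 2 := by
  change _ = (sInf ((fun h : V → ℝ ↦ ∑ v, h v) '' boundedInterpolants (splineOp G ε ^ k) U f K)
    + sSup ((fun h : V → ℝ ↦ ∑ v, h v) '' boundedInterpolants (splineOp G ε ^ k) U f K)) / 2
  have hgQ : g ∈ boundedInterpolants (splineOp G ε ^ k) U f K := hg
  set W := ∑ u ∈ U, f u • Lg u
  have hWf : ∀ u ∈ U, W u = f u := fun u hu ↦ sum_smul_apply_of_lagrange hLgI f hu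
  have hWorth : ∀ z : V → ℝ, (∀ u ∈ U, z u = 0) →
      (splineOp G ε ^ k *ᵥ W) ⬝ᵥ (splineOp G ε ^ k *ᵥ z) = 0 := fun z hz ↦
    dotProduct_mulVec_sum_smul_eq_zero U f Lg fun u hu ↦
      IsInterpolatingSpline.dotProduct_mulVec_eq_zero ⟨hLgI u hu, hLgM u hu⟩ hz
  have hbound : ∀ x, ε ^ k * gnorm x ≤ gnorm (splineOp G ε ^ k *ᵥ x) :=
    pow_mul_gnorm_le_gnorm_pow_mulVec hε.le (mul_gnorm_le_gnorm_splineOp_mulVec G ε) k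
  have hLHS : ∑ u ∈ U, g u * ∑ v, Lg u v = ∑ v, W v :=
    calc ∑ u ∈ U, g u * ∑ v, Lg u v = ∑ u ∈ U, ∑ v, f u * Lg u v :=
          Finset.sum_congr rfl fun u hu ↦ by rw [hgQ.1 u hu, Finset.mul_sum]
      _ = ∑ v, W v := by rw [Finset.sum_comm]; simp [W, Finset.sum_apply]
  rw [hLHS, csInf_add_csSup_eq_of_two_mul_sub_mem (Set.Nonempty.image _ ⟨g, hgQ⟩)
    (bddAbove_image_sum_boundedInterpolants (pow_pos hε k) hbound f K)
    fun t ht ↦ two_mul_sub_mem_image_sum hWf hWorth ht]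
  ring

/-- Optimality: with the spline cubature weights `θ_u = ∑_v L_{k,ε}^{U,u}(v)` coming from
the Lagrangian splines, for every `g ∈ Q(U,f,k,ε,K)` one has
`∑_{u∈U} g(u) θ_u = (a+b)/2`, where `[a,b]` is the interval of integrals of functions in
`Q(U,f,k,ε,K)`. -/
theorem stmt_14 {V : Type*} [Fintype V] [DecidableEq V]
    (G : SimpleGraph V) [DecidableRel G.Adj]
    (U : Finset V) (f : V → ℝ) (k : ℕ) (ε : ℝ) (hε : 0 < ε) (K : ℝ)
    (Lg : V → V → ℝ)
    (hLgI : ∀ u ∈ U, ∀ w ∈ U, Lg u w = if w = u then 1 else 0)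
    (hLgM : ∀ u ∈ U, ∀ Z : V → ℝ, (∀ w ∈ U, Z w = if w = u then 1 else 0) →
      gnorm (((splineOp G ε) ^ k).mulVec (Lg u)) ≤ gnorm (((splineOp G ε) ^ k).mulVec Z))
    (Y : V → ℝ)
    (hYI : ∀ u ∈ U, Y u = f u)
    (hYM : ∀ Z : V → ℝ, (∀ u ∈ U, Z u = f u) →
      gnorm (((splineOp G ε) ^ k).mulVec Y) ≤ gnorm (((splineOp G ε) ^ k).mulVec Z))
    (hK : gnorm (((splineOp G ε) ^ k).mulVec Y) ≤ K)
    (g : V → ℝ)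
    (hg : g ∈ {h : V → ℝ | (∀ u ∈ U, h u = f u) ∧
        gnorm (((splineOp G ε) ^ k).mulVec h) ≤ K}) :
    ∑ u ∈ U, g u * (∑ v, Lg u v) =
      (sInf ((fun h : V → ℝ => ∑ v, h v) ''
          {h : V → ℝ | (∀ u ∈ U, h u = f u) ∧
            gnorm (((splineOp G ε) ^ k).mulVec h) ≤ K}) +
       sSup ((fun h : V → ℝ => ∑ v, h v) ''
          {h : V → ℝ | (∀ u ∈ U, h u = f u) ∧
            gnorm (((splineOp G ε) ^ k).mulVec h) ≤ K})) / 2 :=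
  stmt_14_general G U f k ε hε K Lg hLgI hLgM g hg
end
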